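/- Let X be a finite set and (λ_x)_{x∈X} a probability distribution with max_x λ_x < 1/2. Then there exists a joint probability distribution (b_{x,x'})_{x,x'∈X} with both marginals equal to (λ_x) and with b_{x,x} = 0 for every x ∈ X. -/

import Mathlib

/-!
Take the symmetric matrix `b x y = λ_x λ_y (a_x + a_y)` off the diagonal and `0` on it. Its row
sums are `λ_x (a_x (1 - 2 λ_x) + ∑_y λ_y a_y)`, so it is a coupling as soon as
`a_x (1 - 2 λ_x)` is a constant `t` with `t + ∑_y λ_y a_y = 1`. Since every `λ_x < 1/2`, the
weights `a_x = t / (1 - 2 λ_x)` with `t = (1 + ∑_y λ_y / (1 - 2 λ_y))⁻¹` are nonnegative and do this.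
-/

open Finset

section OffDiagWeightedProduct

variable {X R : Type*} [DecidableEq X]

def offDiagWeightedProduct [CommRing R] (l a : X → R) (p : X × X) : R :=
  if p.1 = p.2 then 0 else l p.1 * l p.2 * (a p.1 + a p.2)

theorem offDiagWeightedProduct_swap [CommRing R] (l a : X → R) (p : X × X) :
    offDiagWeightedProduct l a p.swap = offDiagWeightedProduct l a p := by
  obtain ⟨x, y⟩ := p
  by_cases h : x = y
  · subst h
    rfl
  · simp only [offDiagWeightedProduct, Prod.swap_prod_mk, if_neg h, if_neg (Ne.symm h)]
    ring

theorem offDiagWeightedProduct_nonneg [CommRing R] [PartialOrder R] [IsOrderedRing R]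
    {l a : X → R} (hl : ∀ x, 0 ≤ l x) (ha : ∀ x, 0 ≤ a x) (p : X × X) :
    0 ≤ offDiagWeightedProduct l a p := by
  unfold offDiagWeightedProduct
  split_ifs
  · exact le_rfl
  · exact mul_nonneg (mul_nonneg (hl _) (hl _)) (add_nonneg (ha _) (ha _))

theorem sum_offDiagWeightedProduct [Fintype X] [CommRing R] (l a : X → R) (x : X) :
    ∑ y, offDiagWeightedProduct l a (x, y) =
      l x * (a x * (∑ y, l y - 2 * l x) + ∑ y, l y * a y) := by
  have hsplit : ∀ y, offDiagWeightedProduct l a (x, y) =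
      l x * (a x * l y + l y * a y) - if x = y then l x * (a x * l y + l y * a y) else 0 := by
    intro y
    unfold offDiagWeightedProduct
    split_ifs
    · simp
    · rw [sub_zero]
      ring
  simp only [hsplit, sum_sub_distrib, sum_ite_eq, mem_univ, if_true, ← mul_sum, sum_add_distrib]
  ring

end OffDiagWeightedProduct

section BalancingWeight

variable {X K : Type*} [Fintype X] [Field K] [LinearOrder K] [IsStrictOrderedRing K]

def balancingWeight (l : X → K) (x : X) : K :=
  (1 + ∑ y, l y / (1 - 2 * l y))⁻¹ / (1 - 2 * l x)

variable {l : X → K} (hl0 : ∀ x, 0 ≤ l x) (hmax : ∀ x, l x < 1 / 2)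
include hl0 hmax

theorem one_add_sum_div_one_sub_two_mul_pos : 0 < 1 + ∑ y, l y / (1 - 2 * l y) := by
  have hsum : 0 ≤ ∑ y, l y / (1 - 2 * l y) :=
    sum_nonneg fun y _ => div_nonneg (hl0 y) (by linarith [hmax y])
  linarith

theorem balancingWeight_nonneg (x : X) : 0 ≤ balancingWeight l x :=
  div_nonneg (inv_nonneg.mpr (one_add_sum_div_one_sub_two_mul_pos hl0 hmax).le)
    (by linarith [hmax x])

theorem balancingWeight_mul_add_sum (x : X) :
    balancingWeight l x * (1 - 2 * l x) + ∑ y, l y * balancingWeight l y = 1 := by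
  have hpos := one_add_sum_div_one_sub_two_mul_pos hl0 hmax
  have hden : ∀ y, 1 - 2 * l y ≠ 0 := fun y => by linarith [hmax y]
  have hterm : ∀ y, l y * balancingWeight l y =
      (1 + ∑ y, l y / (1 - 2 * l y))⁻¹ * (l y / (1 - 2 * l y)) := fun y => by
    unfold balancingWeight
    ring
  rw [sum_congr rfl fun y _ => hterm y, ← mul_sum, balancingWeight, div_mul_cancel₀ _ (hden x),
    ← mul_one_add, inv_mul_cancel₀ hpos.ne']

end BalancingWeight

theorem exists_coupling_zero_diagonal {X : Type*} [Fintype X] (l : X → ℝ)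
    (hl0 : ∀ x, 0 ≤ l x) (hl1 : ∑ x, l x = 1) (hmax : ∀ x, l x < 1 / 2) :
    ∃ b : X × X → ℝ, (∀ p, 0 ≤ b p) ∧ (∀ x, ∑ x', b (x, x') = l x) ∧
      (∀ x', ∑ x, b (x, x') = l x') ∧ ∀ x, b (x, x) = 0 := by
  classical
  set b := offDiagWeightedProduct l (balancingWeight l)
  have hrow : ∀ x, ∑ y, b (x, y) = l x := fun x => by
    rw [sum_offDiagWeightedProduct, hl1, balancingWeight_mul_add_sum hl0 hmax, mul_one]
  refine ⟨b, offDiagWeightedProduct_nonneg hl0 (balancingWeight_nonneg hl0 hmax), hrow,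
    fun y => ?_, fun x => if_pos rfl⟩
  simpa only [b, ← offDiagWeightedProduct_swap _ _ (_, y), Prod.swap_prod_mk] using hrow y
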